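/- Let ρ : ℝ³ → (0,∞) be a smooth positive function. Then 2ρ ∇(ρ^{-1/2} Δ(√ρ)) = div( (Δρ) I − ρ^{-1} ∇ρ ⊗ ∇ρ ), where I is the 3×3 identity matrix and (div A)_i = Σ_j ∂_j A_{ij}. -/

import Mathlib

/-- The `i`-th partial derivative of a function on `ℝ³`. -/
noncomputable def pd (i : Fin 3) (f : (Fin 3 → ℝ) → ℝ) : (Fin 3 → ℝ) → ℝ :=
  fun x => fderiv ℝ f x (Pi.single i 1)

/-- The Laplacian of a function on `ℝ³`. -/
noncomputable def lap (f : (Fin 3 → ℝ) → ℝ) : (Fin 3 → ℝ) → ℝ :=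
  fun x => ∑ j : Fin 3, pd j (pd j f) x

section helpers
variable {f g : (Fin 3 → ℝ) → ℝ} {x : Fin 3 → ℝ} {i j : Fin 3}

lemma contDiff_pd (hf : ContDiff ℝ (⊤ : ℕ∞) f) (i : Fin 3) : ContDiff ℝ (⊤ : ℕ∞) (pd i f) := by
  have h1 : ContDiff ℝ (⊤ : ℕ∞) (fderiv ℝ f) := hf.fderiv_right (by exact (by simp))
  exact h1.clm_apply contDiff_const

lemma diff_pd (hf : ContDiff ℝ (⊤ : ℕ∞) f) (i : Fin 3) : DifferentiableAt ℝ (pd i f) x :=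
  ((contDiff_pd hf i).differentiable (by simp)).differentiableAt

lemma contDiff_lap (hf : ContDiff ℝ (⊤ : ℕ∞) f) : ContDiff ℝ (⊤ : ℕ∞) (lap f) :=
  ContDiff.sum fun j _ => contDiff_pd (contDiff_pd hf j) j

lemma pd_mul (hf : DifferentiableAt ℝ f x) (hg : DifferentiableAt ℝ g x) :
    pd i (fun y => f y * g y) x = pd i f x * g x + f x * pd i g x := by
  unfold pd; rw [fderiv_fun_mul hf hg]; simp; ring

lemma pd_sub (hf : DifferentiableAt ℝ f x) (hg : DifferentiableAt ℝ g x) :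
    pd i (fun y => f y - g y) x = pd i f x - pd i g x := by
  unfold pd; rw [fderiv_fun_sub hf hg]; simp

lemma pd_const_mul (c : ℝ) (hf : DifferentiableAt ℝ f x) :
    pd i (fun y => c * f y) x = c * pd i f x := by
  unfold pd; rw [fderiv_const_mul hf]; simp

lemma pd_inv (hf : DifferentiableAt ℝ f x) (h : f x ≠ 0) :
    pd i (fun y => (f y)⁻¹) x = -pd i f x / f x ^ 2 := by
  unfold pd
  rw [fderiv_comp' x (differentiableAt_inv h) hf]
  simp [fderiv_inv]
  ring

lemma pd_sqrt (hf : DifferentiableAt ℝ f x) (h : f x ≠ 0) :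
    pd i (fun y => Real.sqrt (f y)) x = 1 / (2 * Real.sqrt (f x)) * pd i f x := by
  unfold pd
  rw [(hf.hasFDerivAt.sqrt h).fderiv]
  simp

lemma pd_sum {F : Fin 3 → (Fin 3 → ℝ) → ℝ} (hf : ∀ j, DifferentiableAt ℝ (F j) x) :
    pd i (fun y => ∑ j : Fin 3, F j y) x = ∑ j : Fin 3, pd i (F j) x := by
  unfold pd
  rw [fderiv_fun_sum fun j _ => hf j]
  simp

lemma pd_sq (hf : DifferentiableAt ℝ f x) :
    pd i (fun y => f y ^ 2) x = 2 * f x * pd i f x := by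
  have h : (fun y => f y ^ 2) = fun y => f y * f y := by funext y; ring
  rw [h, pd_mul hf hf]; ring

lemma pd_comm (hf : ContDiff ℝ (⊤ : ℕ∞) f) : pd i (pd j f) x = pd j (pd i f) x := by
  have hd : ContDiff ℝ (⊤ : ℕ∞) (fderiv ℝ f) := hf.fderiv_right (by exact (by simp))
  have hdx : DifferentiableAt ℝ (fderiv ℝ f) x := (hd.differentiable (by simp)).differentiableAt
  have H := second_derivative_symmetric (f := f) (f' := fderiv ℝ f)
      (f'' := fderiv ℝ (fderiv ℝ f) x)
      (fun y => ((hf.differentiable (by simp)) y).hasFDerivAt)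
      hdx.hasFDerivAt (Pi.single i 1) (Pi.single j 1)
  show fderiv ℝ (fun y => fderiv ℝ f y (Pi.single j 1)) x (Pi.single i 1)
      = fderiv ℝ (fun y => fderiv ℝ f y (Pi.single i 1)) x (Pi.single j 1)
  rw [fderiv_clm_apply hdx (differentiableAt_const _),
      fderiv_clm_apply hdx (differentiableAt_const _)]
  simpa using H

end helpers

/-- The Bohm potential identity:
`2ρ ∇(ρ^{-1/2} Δ√ρ) = div(Δρ I − ρ⁻¹ ∇ρ ⊗ ∇ρ)` componentwise. -/
theorem stmt_15 (ρ : (Fin 3 → ℝ) → ℝ) (hρ : ContDiff ℝ (⊤ : ℕ∞) ρ) (hpos : ∀ x, 0 < ρ x)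
    (x : Fin 3 → ℝ) (i : Fin 3) :
    2 * ρ x *
        pd i (fun y => (Real.sqrt (ρ y))⁻¹ * lap (fun z => Real.sqrt (ρ z)) y) x =
      ∑ j : Fin 3,
        pd j (fun y =>
          lap ρ y * (if i = j then 1 else 0) - (ρ y)⁻¹ * pd i ρ y * pd j ρ y) x := by
  have hρd : ∀ y, DifferentiableAt ℝ ρ y := fun y => (hρ.differentiable (by simp)).differentiableAt
  have hne : ∀ y, ρ y ≠ 0 := fun y => (hpos y).ne'
  have hsne : ∀ y, Real.sqrt (ρ y) ≠ 0 := fun y => (Real.sqrt_pos.mpr (hpos y)).ne'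
  have hs : ContDiff ℝ (⊤ : ℕ∞) (fun z => Real.sqrt (ρ z)) :=
    contDiff_iff_contDiffAt.mpr fun y => (Real.contDiffAt_sqrt (hne y)).comp y hρ.contDiffAt
  have hsd : ∀ y, DifferentiableAt ℝ (fun z => Real.sqrt (ρ z)) y :=
    fun y => (hs.differentiable (by simp)).differentiableAt
  have hpds : ∀ (k : Fin 3) y, pd k (fun z => Real.sqrt (ρ z)) y
      = 1 / (2 * Real.sqrt (ρ y)) * pd k ρ y := fun k y => pd_sqrt (hρd y) (hne y)
  -- step 1: pointwise identity for the inner function on the LHS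
  have key : ∀ y, (Real.sqrt (ρ y))⁻¹ * lap (fun z => Real.sqrt (ρ z)) y
      = (2 * ρ y)⁻¹ * lap ρ y - (4 * ρ y ^ 2)⁻¹ * ∑ j : Fin 3, pd j ρ y ^ 2 := by
    intro y
    have h1 : ∀ k : Fin 3, pd k (fun z => Real.sqrt (ρ z))
        = fun z => (2 * Real.sqrt (ρ z))⁻¹ * pd k ρ z := by
      intro k; funext z; rw [hpds k z, one_div]
    have h2 : ∀ k : Fin 3, pd k (pd k (fun z => Real.sqrt (ρ z))) y
        = (-(2 * (1 / (2 * Real.sqrt (ρ y)) * pd k ρ y)) / (2 * Real.sqrt (ρ y)) ^ 2) * pd k ρ y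
          + (2 * Real.sqrt (ρ y))⁻¹ * pd k (pd k ρ) y := by
      intro k
      rw [h1 k]
      rw [pd_mul (f := fun z => (2 * Real.sqrt (ρ z))⁻¹) (g := pd k ρ)
        (((hsd y).const_mul 2).inv (by simpa using hsne y)) (diff_pd hρ k)]
      congr 2
      rw [pd_inv (f := fun z => 2 * Real.sqrt (ρ z)) ((hsd y).const_mul 2)
        (by simpa using hsne y)]
      rw [pd_const_mul 2 (hsd y), hpds k y]
    have hlap : lap (fun z => Real.sqrt (ρ z)) y
        = ∑ k : Fin 3, ((-(2 * (1 / (2 * Real.sqrt (ρ y)) * pd k ρ y)) /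
            (2 * Real.sqrt (ρ y)) ^ 2) * pd k ρ y
          + (2 * Real.sqrt (ρ y))⁻¹ * pd k (pd k ρ) y) := by
      show (∑ k : Fin 3, pd k (pd k (fun z => Real.sqrt (ρ z))) y) = _
      exact Finset.sum_congr rfl fun k _ => h2 k
    rw [hlap]
    have hL : lap ρ y = ∑ k : Fin 3, pd k (pd k ρ) y := rfl
    rw [hL]
    have hss : Real.sqrt (ρ y) * Real.sqrt (ρ y) = ρ y := Real.mul_self_sqrt (hpos y).le
    set s := Real.sqrt (ρ y) with hsdef
    have hs0 : s ≠ 0 := hsne y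
    rw [← hss]
    simp only [Fin.sum_univ_three]
    field_simp
    ring
  have hfeq : (fun y => (Real.sqrt (ρ y))⁻¹ * lap (fun z => Real.sqrt (ρ z)) y)
      = fun y => (2 * ρ y)⁻¹ * lap ρ y - (4 * ρ y ^ 2)⁻¹ * ∑ j : Fin 3, pd j ρ y ^ 2 :=
    funext key
  rw [hfeq]
  -- differentiability facts
  have dlap : DifferentiableAt ℝ (lap ρ) x :=
    ((contDiff_lap hρ).differentiable (by simp)).differentiableAt
  have d2ρ : DifferentiableAt ℝ (fun y => 2 * ρ y) x := (hρd x).const_mul 2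
  have h2ne : (2 : ℝ) * ρ x ≠ 0 := by
    have := hpos x; positivity
  have d2inv : DifferentiableAt ℝ (fun y => (2 * ρ y)⁻¹) x := d2ρ.inv h2ne
  have dsq : DifferentiableAt ℝ (fun y => ρ y ^ 2) x := (hρd x).pow 2
  have d4 : DifferentiableAt ℝ (fun y => 4 * ρ y ^ 2) x := dsq.const_mul 4
  have h4ne : (4 : ℝ) * ρ x ^ 2 ≠ 0 := by
    have := hpos x; positivity
  have d4inv : DifferentiableAt ℝ (fun y => (4 * ρ y ^ 2)⁻¹) x := d4.inv h4ne
  have dS : DifferentiableAt ℝ (fun y => ∑ j : Fin 3, pd j ρ y ^ 2) x :=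
    DifferentiableAt.fun_sum fun j _ => (diff_pd hρ j).pow 2
  -- expand the LHS derivative
  rw [pd_sub (f := fun y => (2 * ρ y)⁻¹ * lap ρ y)
      (g := fun y => (4 * ρ y ^ 2)⁻¹ * ∑ j : Fin 3, pd j ρ y ^ 2)
      (d2inv.mul dlap) (d4inv.mul dS),
    pd_mul (f := fun y => (2 * ρ y)⁻¹) (g := lap ρ) d2inv dlap,
    pd_mul (f := fun y => (4 * ρ y ^ 2)⁻¹) (g := fun y => ∑ j : Fin 3, pd j ρ y ^ 2)
      d4inv dS,
    pd_inv (f := fun y => 2 * ρ y) d2ρ h2ne,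
    pd_inv (f := fun y => 4 * ρ y ^ 2) d4 h4ne,
    pd_const_mul 2 (hρd x),
    pd_const_mul (f := fun y => ρ y ^ 2) 4 dsq,
    pd_sq (hρd x),
    pd_sum (F := fun j => fun y => pd j ρ y ^ 2) (fun j => (diff_pd hρ j).pow 2)]
  have hsq : ∀ j : Fin 3, pd i (fun y => pd j ρ y ^ 2) x
      = 2 * pd j ρ x * pd i (pd j ρ) x := fun j => pd_sq (diff_pd hρ j)
  rw [Finset.sum_congr rfl fun j _ => hsq j]
  -- expand the RHS derivatives
  have hRj : ∀ j : Fin 3,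
      pd j (fun y => lap ρ y * (if i = j then 1 else 0)
        - (ρ y)⁻¹ * pd i ρ y * pd j ρ y) x
      = pd j (lap ρ) x * (if i = j then 1 else 0)
        - (((-pd j ρ x / ρ x ^ 2) * pd i ρ x + (ρ x)⁻¹ * pd i (pd j ρ) x) * pd j ρ x
           + ((ρ x)⁻¹ * pd i ρ x) * pd j (pd j ρ) x) := by
    intro j
    have dinv : DifferentiableAt ℝ (fun y => (ρ y)⁻¹) x := (hρd x).inv (hne x)
    have d1 : DifferentiableAt ℝ (fun y => lap ρ y * (if i = j then 1 else 0)) x :=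
      dlap.mul_const _
    have d2 : DifferentiableAt ℝ (fun y => (ρ y)⁻¹ * pd i ρ y) x := dinv.mul (diff_pd hρ i)
    have d3 : DifferentiableAt ℝ (fun y => (ρ y)⁻¹ * pd i ρ y * pd j ρ y) x :=
      d2.mul (diff_pd hρ j)
    rw [pd_sub (f := fun y => lap ρ y * (if i = j then 1 else 0))
        (g := fun y => (ρ y)⁻¹ * pd i ρ y * pd j ρ y) d1 d3,
      pd_mul (f := fun y => (ρ y)⁻¹ * pd i ρ y) (g := pd j ρ) d2 (diff_pd hρ j),
      pd_mul (f := fun y => (ρ y)⁻¹) (g := pd i ρ) dinv (diff_pd hρ i),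
      pd_inv (hρd x) (hne x),
      pd_comm (i := j) (j := i) hρ,
      pd_mul (f := lap ρ) (g := fun _ => if i = j then 1 else 0) dlap
        (differentiableAt_const _)]
    have hc : pd j (fun _ : Fin 3 → ℝ => if i = j then (1:ℝ) else 0) x = 0 := by
      simp [pd]
    rw [hc]
    ring
  rw [Finset.sum_congr rfl fun j _ => hRj j, Finset.sum_sub_distrib]
  have hδ : ∑ j : Fin 3, pd j (lap ρ) x * (if i = j then 1 else 0) = pd i (lap ρ) x := by
    simp [mul_ite]
  rw [hδ]
  have hLx : lap ρ x = pd 0 (pd 0 ρ) x + pd 1 (pd 1 ρ) x + pd 2 (pd 2 ρ) x := by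
    simp [lap, Fin.sum_univ_three]
  rw [hLx]
  simp only [Fin.sum_univ_three]
  have hr := hne x
  field_simp
  ring
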